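/- arXiv:1406.6341 — 7 statements merged into one kernel-verified Lean document; each statement's English description precedes it below -/
import Mathlib

section
/- Let y be a finite word over an alphabet Σ and let x be a word of length m ≥ 2 with x₁ = x[1..m-1] and x₂ = x[1..m-2] (the suffix of x obtained by removing its first letter, and that suffix with its last letter further removed). Define B(w) = { y[j-1] : j ≥ 1 and w occurs in y at starting position j } for any word w. Then x is a minimal absent word of y if and only if x₁ occurs in y, x₂ occurs in y, and the letter x[0] belongs to B(x₂) but not to B(x₁). -/
/-!
A proper factor of a word `x` is a factor of `x` with its first or its last letter removed,
so `x` is a minimal absent word exactly when `x` is absent while `x.tail` and `x.dropLast` occur.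
For `x = a :: s` these are `s` and `a :: s.dropLast`, and `s.dropLast` occurs because `s` does.
-/

/-- `x` is a factor (contiguous subword) of `y` iff `x <:+: y` (`List.IsInfix`).
A minimal absent word of `y`: a word of length at least 2 that is not a factor
of `y` but all of whose proper factors are factors of `y`. -/
def MinimalAbsentWord {α : Type*} (y x : List α) : Prop :=
  2 ≤ x.length ∧ ¬ x <:+: y ∧ ∀ f : List α, f <:+: x → f ≠ x → f <:+: y

namespace List

variable {α : Type*} {f l : List α}

theorem IsPrefix.prefix_dropLast_of_ne (h : f <+: l) (hne : f ≠ l) : f <+: l.dropLast := by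
  have hl : l ≠ [] := by
    rintro rfl
    exact hne (prefix_nil.mp h)
  rw [← dropLast_concat_getLast hl, prefix_concat_iff] at h
  exact h.resolve_left (by rwa [dropLast_concat_getLast hl])

theorem IsInfix.infix_tail_or_infix_dropLast_of_ne (h : f <:+: l) (hne : f ≠ l) :
    f <:+: l.tail ∨ f <:+: l.dropLast := by
  cases l with
  | nil => exact absurd (infix_nil.mp h) hne
  | cons a l =>
    rcases infix_cons_iff.mp h with hpre | hinf
    · exact Or.inr (hpre.prefix_dropLast_of_ne hne).isInfix
    · exact Or.inl hinf

end List

theorem minimalAbsentWord_iff {α : Type*} {y x : List α} :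
    MinimalAbsentWord y x ↔
      2 ≤ x.length ∧ ¬ x <:+: y ∧ x.tail <:+: y ∧ x.dropLast <:+: y := by
  constructor
  · rintro ⟨hlen, habs, hmin⟩
    have hlen_ne {f : List α} (hf : f.length < x.length) : f ≠ x :=
      ne_of_apply_ne List.length hf.ne
    refine ⟨hlen, habs, hmin _ x.tail_suffix.isInfix (hlen_ne ?_),
      hmin _ x.dropLast_prefix.isInfix (hlen_ne ?_)⟩ <;>
    · simp only [List.length_tail, List.length_dropLast]; omega
  · rintro ⟨hlen, habs, htail, hdrop⟩
    refine ⟨hlen, habs, fun f hf hne => ?_⟩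
    rcases hf.infix_tail_or_infix_dropLast_of_ne hne with hf | hf
    · exact hf.trans htail
    · exact hf.trans hdrop

/-- Membership of a letter `a` in `B(w)` (letters immediately preceding an
occurrence of `w` in `y`) is equivalent to `a :: w` being a factor of `y`. -/
theorem stmt_0 {α : Type*} (y : List α) (a : α) (s : List α) (hs : s ≠ []) :
    MinimalAbsentWord y (a :: s) ↔
      s <:+: y ∧ s.dropLast <:+: y ∧
        (a :: s.dropLast) <:+: y ∧ ¬ (a :: s) <:+: y := by
  have hlen : 2 ≤ (a :: s).length := by
    simpa [Nat.one_le_iff_ne_zero] using hs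
  rw [minimalAbsentWord_iff, List.tail_cons, List.dropLast_cons_of_ne_nil hs]
  constructor
  · rintro ⟨-, habs, hs_occ, hdrop⟩
    exact ⟨hs_occ, s.dropLast_prefix.isInfix.trans hs_occ, hdrop, habs⟩
  · rintro ⟨hs_occ, -, hdrop, habs⟩
    exact ⟨hlen, habs, hs_occ, hdrop⟩
end

section
/- Let y be a word over alphabet Σ in which every letter of Σ occurs. Then a word w over Σ is a factor of y if and only if no minimal absent word of y is a factor of w. Consequently, the set of minimal absent words of y uniquely determines the set of factors of y. -/
private lemma exists_maw {α : Type*} (y : List α) (hletters : ∀ a : α, [a] <:+: y) :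
    ∀ w : List α, ¬ w <:+: y → ∃ x, MinimalAbsentWord y x ∧ x <:+: w := by
  suffices h : ∀ n, ∀ w : List α, w.length ≤ n → ¬ w <:+: y → ∃ x, MinimalAbsentWord y x ∧ x <:+: w by
    intro w; exact h w.length w le_rfl
  intro n
  induction n with
  | zero =>
    intro w hlen hw
    rw [Nat.le_zero, List.length_eq_zero_iff] at hlen
    exact absurd (hlen ▸ List.nil_infix) hw
  | succ n ih =>
    intro w hlen hw
    by_cases h : ∀ f : List α, f <:+: w → f ≠ w → f <:+: y
    · refine ⟨w, ⟨?_, hw, h⟩, List.infix_refl w⟩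
      match w with
      | [] => exact absurd (List.nil_infix) hw
      | [a] => exact absurd (hletters a) hw
      | a :: b :: t => simp [Nat.succ_le_succ, Nat.le_add_left]
    · push_neg at h
      obtain ⟨f, hfw, hfne, hfy⟩ := h
      have hlt : f.length < w.length := by
        rcases lt_or_eq_of_le hfw.length_le with h | h
        · exact h
        · exact absurd (hfw.eq_of_length h) hfne
      obtain ⟨x, hx, hxf⟩ := ih f (by omega) hfy
      exact ⟨x, hx, hxf.trans hfw⟩

theorem stmt_10 {α : Type*} (y : List α)
    (hletters : ∀ a : α, [a] <:+: y) :
    (∀ w : List α, w <:+: y ↔ ∀ x : List α, MinimalAbsentWord y x → ¬ x <:+: w) ∧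
    (∀ y' : List α, (∀ a : α, [a] <:+: y') →
      {x : List α | MinimalAbsentWord y x} = {x : List α | MinimalAbsentWord y' x} →
      {w : List α | w <:+: y} = {w : List α | w <:+: y'}) := by
  have main : ∀ w : List α, w <:+: y ↔ ∀ x : List α, MinimalAbsentWord y x → ¬ x <:+: w := by
    intro w
    constructor
    · intro hw x hx hxw
      exact hx.2.1 (hxw.trans hw)
    · intro h
      by_contra hw
      obtain ⟨x, hx, hxw⟩ := exists_maw y hletters w hw
      exact h x hx hxw
  refine ⟨main, ?_⟩
  intro y' hl' hset
  have main' : ∀ w : List α, w <:+: y' ↔ ∀ x : List α, MinimalAbsentWord y' x → ¬ x <:+: w := by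
    intro w
    constructor
    · intro hw x hx hxw
      exact hx.2.1 (hxw.trans hw)
    · intro h
      by_contra hw
      obtain ⟨x, hx, hxw⟩ := exists_maw y' hl' w hw
      exact h x hx hxw
  ext w
  simp only [Set.mem_setOf_eq, main, main']
  have hiff : ∀ x, MinimalAbsentWord y x ↔ MinimalAbsentWord y' x := fun x => by
    have := Set.ext_iff.mp hset x; simpa [Set.mem_setOf_eq] using this
  constructor <;> intro h x hx
  · exact h x ((hiff x).mpr hx)
  · exact h x ((hiff x).mp hx)
end

section
/- Let y be a word of length n, SA its suffix array and iSA its inverse. For positions j, k in y with iSA[j] < iSA[k], the length of the longest common prefix of the suffixes y[j..n-1] and y[k..n-1] equals the minimum of LCP[r] over r in (iSA[j], iSA[k]], where LCP[r] is the length of the longest common prefix of the suffixes ranked r-1 and r. -/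
/-- The length of the longest common prefix of two words. -/
def lcpLen {α : Type*} [DecidableEq α] : List α → List α → ℕ
  | a :: s, b :: t => if a = b then lcpLen s t + 1 else 0
  | _, _ => 0

lemma lcpLen_nil_left {α : Type*} [DecidableEq α] (c : List α) : lcpLen [] c = 0 := by
  cases c <;> rfl

lemma list_lt_iff_lex {α : Type*} [LinearOrder α] (a b : List α) :
    a < b ↔ List.Lex (· < ·) a b := Iff.rfl

lemma lcpLen_min {α : Type*} [LinearOrder α] :
    ∀ (a b c : List α), a < b → b < c →
      lcpLen a c = min (lcpLen a b) (lcpLen b c) := by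
  intro a
  induction a with
  | nil => intro b c _ _; simp [lcpLen_nil_left]
  | cons x a ih =>
    intro b c h1 h2
    rw [list_lt_iff_lex] at h1 h2
    cases h1 with
    | rel hxy =>
      rename_i y b'
      cases h2 with
      | rel hyz =>
        rename_i z c'
        have hxz : x < z := hxy.trans hyz
        simp [lcpLen, hxy.ne, hxz.ne]
      | cons h =>
        rename_i c'
        simp [lcpLen, hxy.ne]
    | cons h1' =>
      rename_i b'
      cases h2 with
      | rel hxz =>
        rename_i z c'
        simp [lcpLen, hxz.ne]
      | cons h2' =>
        rename_i c'
        simp [lcpLen, ih b' c' h1' h2', Nat.succ_min_succ]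


lemma inf'_congr_set {β γ : Type*} [SemilatticeInf γ] {s t : Finset β} (h : s = t)
    (hs : s.Nonempty) (f : β → γ) : s.inf' hs f = t.inf' (h ▸ hs) f := by
  subst h; rfl

lemma lcp_interval {α : Type*} [LinearOrder α] (y : List α) (SA : ℕ → ℕ)
    (hsorted : ∀ r s : ℕ, r < s → s < y.length → y.drop (SA r) < y.drop (SA s)) :
    ∀ s r : ℕ, ∀ hr : r < s, s < y.length →
      lcpLen (y.drop (SA r)) (y.drop (SA s)) =
        (Finset.Ioc r s).inf' (Finset.nonempty_Ioc.mpr hr)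
          (fun t => lcpLen (y.drop (SA (t - 1))) (y.drop (SA t))) := by
  intro s
  induction s with
  | zero => intro r hr; omega
  | succ s' ih =>
    intro r hr hs
    rcases eq_or_lt_of_le (Nat.lt_succ_iff.mp hr) with heq | hlt'
    · subst heq
      rw [inf'_congr_set (Nat.Ioc_succ_singleton r), Finset.inf'_singleton]
      simp
    · have hIoc : Finset.Ioc r (s' + 1) = insert (s' + 1) (Finset.Ioc r s') := by
        ext t
        simp only [Finset.mem_Ioc, Finset.mem_insert]
        omega
      rw [lcpLen_min _ (y.drop (SA s')) _
            (hsorted r s' hlt' (Nat.lt_of_succ_lt hs))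
            (hsorted s' (s' + 1) (Nat.lt_succ_self _) hs),
          ih r hlt' (Nat.lt_of_succ_lt hs),
          inf'_congr_set hIoc, Finset.inf'_insert]
      simp only [Nat.add_sub_cancel]
      rw [min_comm]

/-- The lcp of two suffixes equals the minimum of the LCP array on the open-closed
rank interval between them. `SA` is the suffix array (ranks to positions) and
`iSA` its inverse. -/
theorem stmt_11 {α : Type*} [LinearOrder α] (y : List α)
    (SA iSA : ℕ → ℕ)
    (hSA : ∀ r < y.length, SA r < y.length)
    (hinv : ∀ i < y.length, iSA i < y.length ∧ SA (iSA i) = i)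
    (hsorted : ∀ r s : ℕ, r < s → s < y.length → y.drop (SA r) < y.drop (SA s))
    (j k : ℕ) (hj : j < y.length) (hk : k < y.length)
    (hlt : iSA j < iSA k) :
    lcpLen (y.drop j) (y.drop k) =
      (Finset.Ioc (iSA j) (iSA k)).inf'
        (Finset.nonempty_Ioc.mpr hlt)
        (fun r => lcpLen (y.drop (SA (r - 1))) (y.drop (SA r))) := by
  have hjk := lcp_interval y SA hsorted (iSA k) (iSA j) hlt (hinv k hk).1
  rw [(hinv j hj).2, (hinv k hk).2] at hjk
  exact hjk
end

section
/- Let x be a minimal absent word of length m ≥ 2 of a word y of length n, and let SA and LCP be the suffix array and LCP array of y. Then there exists an index i ∈ [0, n-1] such that the longest proper suffix x₁ = x[1..m-1] of x satisfies x₁ = y[SA[i] .. SA[i]+LCP[i]] or x₁ = y[SA[i] .. SA[i]+LCP[i+1]] (indices taken inclusively; i.e., x₁ is the prefix of the suffix y[SA[i]..n-1] of length LCP[i]+1 or of length LCP[i+1]+1). -/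
namespace List

variable {α : Type*}

theorem IsInfix.exists_prefix_drop {l₁ l₂ : List α} (h : l₁ <:+: l₂) :
    ∃ k, l₁ <+: l₂.drop k := by
  obtain ⟨t, hpre, hsuf⟩ := infix_iff_prefix_suffix.1 h
  exact ⟨_, suffix_iff_eq_drop.1 hsuf ▸ hpre⟩

theorem IsPrefix.of_le_of_le [LinearOrder α] :
    ∀ {p u v w : List α}, p <+: u → p <+: w → u ≤ v → v ≤ w → p <+: v
  | [], _, _, _, _, _, _, _ => nil_prefix
  | _ :: _, [], _, _, hu, _, _, _ => by simp at hu
  | _ :: _, _ :: _, _, [], _, hw, _, _ => by simp at hw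
  | _ :: _, _ :: _, [], _ :: _, _, _, huv, _ =>
    absurd (nil_lt_cons _ _) (not_lt.2 huv)
  | a :: p, c :: u, b :: v, d :: w, hu, hw, huv, hvw => by
    rcases huv.lt_or_eq with huv | huv
    swap; · exact huv ▸ hu
    rcases hvw.lt_or_eq with hvw | hvw
    swap; · exact hvw ▸ hw
    obtain ⟨rfl, hpu⟩ := cons_prefix_cons.1 hu
    obtain ⟨rfl, hpw⟩ := cons_prefix_cons.1 hw
    rcases cons_lt_cons_iff.1 huv with hab | ⟨rfl, htuv⟩ <;>
      rcases cons_lt_cons_iff.1 hvw with hba | ⟨hba, htvw⟩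
    · exact absurd hab (lt_asymm hba)
    · exact absurd hab (hba ▸ lt_irrefl _)
    · exact absurd hba (lt_irrefl _)
    · exact cons_prefix_cons.2 ⟨rfl, hpu.of_le_of_le hpw htuv.le htvw.le⟩

end List

theorem Nat.exists_first_last_lt {P : ℕ → Prop} {n k : ℕ} (hk : k < n) (hP : P k) :
    ∃ r₀ < n, ∃ r₁ < n, P r₀ ∧ P r₁ ∧ (∀ r < r₀, ¬ P r) ∧ ∀ r, r₁ < r → r < n → ¬ P r := by
  classical
  exact ⟨Nat.find ⟨k, hP⟩, (Nat.find_min' _ hP).trans_lt hk,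
    Nat.findGreatest P (n - 1), (Nat.findGreatest_le _).trans_lt (by omega),
    Nat.find_spec ⟨k, hP⟩, Nat.findGreatest_spec (m := k) (by omega) hP,
    fun _ => Nat.find_min _, fun _ hr hrn => Nat.findGreatest_is_greatest hr (by omega)⟩

section lcpLen

variable {α : Type*} [DecidableEq α]

theorem lcpLen_comm : ∀ u v : List α, lcpLen u v = lcpLen v u
  | [], [] | [], _ :: _ | _ :: _, [] => rfl
  | a :: u, b :: v => by
    by_cases h : a = b
    · subst h; simp [lcpLen, lcpLen_comm u v]
    · simp [lcpLen, h, Ne.symm h]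

theorem length_le_lcpLen {p u v : List α} (hu : p <+: u) (hv : p <+: v) :
    p.length ≤ lcpLen u v := by
  induction p generalizing u v with
  | nil => exact Nat.zero_le _
  | cons a p ih =>
    obtain ⟨su, rfl⟩ := hu
    obtain ⟨sv, rfl⟩ := hv
    simpa [lcpLen] using ih (List.prefix_append p su) (List.prefix_append p sv)

theorem List.IsPrefix.of_length_le_lcpLen {p u v : List α} (hv : p <+: v)
    (hlen : p.length ≤ lcpLen u v) : p <+: u := by
  induction p generalizing u v with
  | nil => exact List.nil_prefix
  | cons a p ih =>
    obtain ⟨sv, rfl⟩ := hv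
    match u, hlen with
    | c :: u, hlen =>
      by_cases hca : c = a
      · subst hca
        simp only [List.cons_append, lcpLen, if_true, List.length_cons,
          add_le_add_iff_right] at hlen
        exact List.cons_prefix_cons.2 ⟨rfl, ih (List.prefix_append p sv) hlen⟩
      · simp [lcpLen, hca] at hlen

theorem eq_take_lcpLen_succ {t u v : List α} (ht : t ≠ []) (hu : t.dropLast <+: u)
    (hnu : ¬ t <+: u) (hv : t <+: v) : t = v.take (lcpLen u v + 1) := by
  have hle : t.length - 1 ≤ lcpLen u v := by
    simpa using length_le_lcpLen hu ((List.dropLast_prefix t).trans hv)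
  have hlt : lcpLen u v < t.length := by
    by_contra! h
    exact hnu (hv.of_length_le_lcpLen h)
  have hpos : 0 < t.length := List.length_pos_iff.2 ht
  rw [show lcpLen u v + 1 = t.length by omega]
  exact List.prefix_iff_eq_take.1 hv

end lcpLen

namespace MinimalAbsentWord

variable {α : Type*} {y x : List α}

theorem tail_ne_nil (h : MinimalAbsentWord y x) : x.tail ≠ [] := by
  have := h.1
  rw [← List.length_pos_iff, List.length_tail]
  omega

theorem tail_infix (h : MinimalAbsentWord y x) : x.tail <:+: y :=
  h.2.2 _ (List.tail_suffix x).isInfix fun he => by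
    have hlen := congrArg List.length he
    rw [List.length_tail] at hlen
    have := h.1
    omega

theorem exists_drop_prefix_dropLast_tail (h : MinimalAbsentWord y x) :
    ∃ p, x.tail.dropLast <+: y.drop p ∧ ¬ x.tail <+: y.drop p := by
  obtain ⟨a, t, rfl⟩ := List.exists_cons_of_ne_nil <| List.ne_nil_of_length_pos <|
    lt_of_lt_of_le two_pos h.1
  have ht : t ≠ [] := h.tail_ne_nil
  have hd : (a :: t).dropLast <:+: y :=
    h.2.2 _ (List.dropLast_prefix _).isInfix fun he => by simpa using congrArg List.length he
  rw [List.dropLast_cons_of_ne_nil ht] at hd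
  obtain ⟨j, s, hs⟩ := hd.exists_prefix_drop
  have hdrop : y.drop j = a :: y.drop (j + 1) := by
    rw [← List.tail_drop, ← hs]; rfl
  refine ⟨j + 1, ⟨s, ?_⟩, fun hpre => h.2.1 ?_⟩
  · rw [← List.tail_drop, ← hs]; rfl
  · have hx : a :: t <+: y.drop j := hdrop ▸ List.cons_prefix_cons.2 ⟨rfl, hpre⟩
    exact hx.isInfix.trans (List.drop_suffix j y).isInfix

end MinimalAbsentWord

section SuffixArray

variable {α : Type*} [LinearOrder α] {y : List α} {SA : ℕ → ℕ}

theorem exists_SA_eq (hSA : ∀ r < y.length, SA r < y.length)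
    (hsorted : ∀ r s : ℕ, r < s → s < y.length → y.drop (SA r) < y.drop (SA s))
    {p : ℕ} (hp : p < y.length) : ∃ r < y.length, SA r = p := by
  let f : Fin y.length → Fin y.length := fun r => ⟨SA r, hSA r r.2⟩
  have hf : Function.Injective f := by
    intro r s hrs
    have hrs : SA r = SA s := congrArg Fin.val hrs
    by_contra hne
    rcases lt_or_gt_of_ne hne with hlt | hlt
    · exact (hsorted r s hlt s.2).ne (by rw [hrs])
    · exact (hsorted s r hlt r.2).ne (by rw [hrs])
  obtain ⟨r, hr⟩ := Finite.injective_iff_surjective.1 hf ⟨p, hp⟩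
  exact ⟨r, r.2, congrArg Fin.val hr⟩

theorem drop_SA_le_of_le
    (hsorted : ∀ r s : ℕ, r < s → s < y.length → y.drop (SA r) < y.drop (SA s))
    {r s : ℕ} (hrs : r ≤ s) (hs : s < y.length) : y.drop (SA r) ≤ y.drop (SA s) := by
  rcases hrs.eq_or_lt with rfl | hlt
  · exact le_rfl
  · exact (hsorted r s hlt hs).le

variable {LCP : ℕ → ℕ}

theorem eq_take_LCP_succ_of_pred
    (hLCP : ∀ r, 1 ≤ r → r < y.length → LCP r = lcpLen (y.drop (SA (r - 1))) (y.drop (SA r)))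
    {t : List α} {r : ℕ} (hr : 1 ≤ r) (hrn : r < y.length)
    (ht : t ≠ []) (hpre : t.dropLast <+: y.drop (SA (r - 1))) (hnot : ¬ t <+: y.drop (SA (r - 1)))
    (htr : t <+: y.drop (SA r)) : t = (y.drop (SA r)).take (LCP r + 1) := by
  rw [hLCP r hr hrn]
  exact eq_take_lcpLen_succ ht hpre hnot htr

theorem eq_take_LCP_succ_of_succ
    (hLCP : ∀ r, 1 ≤ r → r < y.length → LCP r = lcpLen (y.drop (SA (r - 1))) (y.drop (SA r)))
    {t : List α} {r : ℕ} (hrn : r + 1 < y.length)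
    (ht : t ≠ []) (hpre : t.dropLast <+: y.drop (SA (r + 1))) (hnot : ¬ t <+: y.drop (SA (r + 1)))
    (htr : t <+: y.drop (SA r)) : t = (y.drop (SA r)).take (LCP (r + 1) + 1) := by
  rw [hLCP (r + 1) (Nat.le_add_left 1 r) hrn, Nat.add_sub_cancel, lcpLen_comm]
  exact eq_take_lcpLen_succ ht hpre hnot htr

theorem exists_eq_take_LCP_succ (hSA : ∀ r < y.length, SA r < y.length)
    (hsorted : ∀ r s : ℕ, r < s → s < y.length → y.drop (SA r) < y.drop (SA s))
    (hLCP0 : LCP 0 = 0)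
    (hLCP : ∀ r, 1 ≤ r → r < y.length → LCP r = lcpLen (y.drop (SA (r - 1))) (y.drop (SA r)))
    {t : List α} (ht : t ≠ []) (hocc : t <:+: y)
    (hsep : ∃ p, t.dropLast <+: y.drop p ∧ ¬ t <+: y.drop p) :
    ∃ i < y.length,
      t = (y.drop (SA i)).take (LCP i + 1) ∨ t = (y.drop (SA i)).take (LCP (i + 1) + 1) := by
  have hmono {r s : ℕ} : r ≤ s → s < y.length → y.drop (SA r) ≤ y.drop (SA s) :=
    drop_SA_le_of_le hsorted
  obtain ⟨k, hk⟩ := hocc.exists_prefix_drop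
  have hkn : k < y.length := by
    by_contra! hkn
    exact ht (List.prefix_nil.1 (List.drop_eq_nil_iff.2 hkn ▸ hk))
  obtain ⟨rk, hrk, rfl⟩ := exists_SA_eq hSA hsorted hkn
  obtain ⟨r₀, hr₀n, r₁, hr₁n, hr₀, hr₁, hbelow, habove⟩ :=
    Nat.exists_first_last_lt (P := fun r => t <+: y.drop (SA r)) hrk hk
  obtain ⟨p, hpw, hpt⟩ := hsep
  by_cases hp : p < y.length
  · obtain ⟨rp, hrp, rfl⟩ := exists_SA_eq hSA hsorted hp
    rcases lt_or_ge rp r₀ with hlt | hge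
    · have hpre := hpw.of_le_of_le ((List.dropLast_prefix t).trans hr₀)
        (hmono (s := r₀ - 1) (by omega) (by omega)) (hmono (by omega) hr₀n)
      exact ⟨r₀, hr₀n, .inl (eq_take_LCP_succ_of_pred hLCP (by omega) hr₀n ht hpre
        (hbelow _ (by omega)) hr₀)⟩
    rcases lt_or_ge r₁ rp with hlt | hle
    · have hpre := ((List.dropLast_prefix t).trans hr₁).of_le_of_le hpw
        (hmono (Nat.le_succ r₁) (by omega)) (hmono hlt hrp)
      exact ⟨r₁, hr₁n, .inr (eq_take_LCP_succ_of_succ hLCP (by omega) ht hpre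
        (habove _ (by omega) (by omega)) hr₁)⟩
    · exact absurd (hr₀.of_le_of_le hr₁ (hmono hge hrp) (hmono hle hr₁n)) hpt
  · -- `y.drop p = []`: `t` is a single letter, and `LCP 0 = 0` serves a block starting at rank 0
    have hw : t.dropLast = [] := List.prefix_nil.1 (List.drop_eq_nil_iff.2 (not_lt.1 hp) ▸ hpw)
    rcases Nat.eq_zero_or_pos r₀ with rfl | h₀
    · have hlen : t.length = LCP 0 + 1 := by
        have hdrop : t.length - 1 = 0 := by simpa using congrArg List.length hw
        have hpos := List.length_pos_iff.2 ht
        omega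
      exact ⟨0, hr₀n, .inl (hlen ▸ List.prefix_iff_eq_take.1 hr₀)⟩
    · exact ⟨r₀, hr₀n, .inl (eq_take_LCP_succ_of_pred hLCP h₀ hr₀n ht (hw ▸ List.nil_prefix)
        (hbelow _ (by omega)) hr₀)⟩

end SuffixArray

theorem stmt_12_general {α : Type*} [LinearOrder α] (y x : List α)
    (h : MinimalAbsentWord y x)
    (SA LCP : ℕ → ℕ)
    (hSA : ∀ r < y.length, SA r < y.length)
    (hsorted : ∀ r s : ℕ, r < s → s < y.length → y.drop (SA r) < y.drop (SA s))
    (hLCP0 : LCP 0 = 0)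
    (hLCP : ∀ r, 1 ≤ r → r < y.length →
      LCP r = lcpLen (y.drop (SA (r - 1))) (y.drop (SA r))) :
    ∃ i < y.length,
      x.tail = (y.drop (SA i)).take (LCP i + 1) ∨
      x.tail = (y.drop (SA i)).take (LCP (i + 1) + 1) :=
  exists_eq_take_LCP_succ hSA hsorted hLCP0 hLCP h.tail_ne_nil h.tail_infix
    h.exists_drop_prefix_dropLast_tail

/-- Lemma 2: the longest proper suffix `x.tail` of a minimal absent word `x`
equals the prefix of length `LCP[i] + 1` or `LCP[i+1] + 1` of the suffix
`y[SA[i]..n-1]`, for some index `i`. -/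
theorem stmt_12 {α : Type*} [LinearOrder α] (y x : List α)
    (h : MinimalAbsentWord y x)
    (SA LCP : ℕ → ℕ)
    (hSA : ∀ r < y.length, SA r < y.length)
    (hSAinj : ∀ r < y.length, ∀ s < y.length, SA r = SA s → r = s)
    (hsorted : ∀ r s : ℕ, r < s → s < y.length → y.drop (SA r) < y.drop (SA s))
    (hLCP0 : LCP 0 = 0) (hLCPn : LCP y.length = 0)
    (hLCP : ∀ r, 1 ≤ r → r < y.length →
      LCP r = lcpLen (y.drop (SA (r - 1))) (y.drop (SA r))) :
    ∃ i < y.length,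
      x.tail = (y.drop (SA i)).take (LCP i + 1) ∨
      x.tail = (y.drop (SA i)).take (LCP (i + 1) + 1) :=
  stmt_12_general y x h SA LCP hSA hsorted hLCP0 hLCP
end

section
/- Let y be a word of length n, and suppose x (|x| = m ≥ 2) is a minimal absent word of y. If j is the starting position of an occurrence of x[0..m-2] in y and k is the starting position of an occurrence of x[1..m-1] in y, then the longest common prefix of the suffixes y[j+1..n-1] and y[k..n-1] has length exactly m-2 (i.e., it equals x[1..m-2]). -/
section lcpLen

variable {α : Type*} [DecidableEq α]

theorem length_le_lcpLen_of_prefix {p s t : List α} (hs : p <+: s) (ht : p <+: t) :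
    p.length ≤ lcpLen s t := by
  induction p generalizing s t with
  | nil => simp
  | cons a p ih =>
    obtain ⟨u, rfl⟩ := hs
    obtain ⟨v, rfl⟩ := ht
    simpa [lcpLen] using ih (List.prefix_append p u) (List.prefix_append p v)

theorem take_eq_take_of_le_lcpLen {n : ℕ} {s t : List α} (h : n ≤ lcpLen s t) :
    s.take n = t.take n := by
  induction n generalizing s t with
  | zero => simp
  | succ n ih =>
    match s, t with
    | [], _ | _ :: _, [] => simp [lcpLen] at h
    | a :: s, b :: t =>
      by_cases hab : a = b
      · subst hab
        simp only [lcpLen, if_true, Nat.add_le_add_iff_right] at h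
        simp [ih h]
      · simp [lcpLen, hab] at h

end lcpLen

theorem List.drop_eq_cons_drop_succ_of_prefix {α : Type*} {y l : List α} {a : α} {j : ℕ}
    (h : a :: l <+: y.drop j) : y.drop j = a :: y.drop (j + 1) := by
  obtain ⟨u, hu⟩ := h
  rw [← List.drop_drop, ← hu]
  rfl

/-- If `x[0..m-2]` occurs at position `j` and `x[1..m-1]` occurs at position `k`
in `y`, then the lcp of the suffixes `y[j+1..]` and `y[k..]` has length exactly
`m - 2`. An occurrence of a word `w` at position `p` is expressed by
`(y.drop p).take w.length = w`. -/
theorem stmt_13 {α : Type*} [DecidableEq α] (y x : List α)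
    (h : MinimalAbsentWord y x) (j k : ℕ)
    (hj : (y.drop j).take (x.length - 1) = x.dropLast)
    (hk : (y.drop k).take (x.length - 1) = x.tail) :
    lcpLen (y.drop (j + 1)) (y.drop k) = x.length - 2 := by
  obtain ⟨hm, habsent, -⟩ := h
  obtain ⟨a, w, rfl⟩ := List.exists_cons_of_length_pos (by omega : 0 < x.length)
  have hw : w ≠ [] := by rintro rfl; simp at hm
  simp only [List.length_cons, Nat.add_sub_cancel, List.tail_cons,
    List.dropLast_cons_of_ne_nil hw] at hj hk ⊢
  show lcpLen _ _ = w.length - 1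
  have hpj : a :: w.dropLast <+: y.drop j := by
    simpa [hj] using List.take_prefix w.length (y.drop j)
  have hpk : w <+: y.drop k := hk ▸ List.take_prefix _ _
  have hyj := List.drop_eq_cons_drop_succ_of_prefix hpj
  apply le_antisymm
  · refine Nat.le_sub_one_of_lt (lt_of_not_ge fun hlong => ?_)
    have hw_occ : w <+: y.drop (j + 1) := by
      rw [List.prefix_iff_eq_take, take_eq_take_of_le_lcpLen hlong]
      exact List.prefix_iff_eq_take.mp hpk
    have hx_occ : a :: w <+: y.drop j := hyj ▸ (List.prefix_cons_inj a).mpr hw_occ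
    exact habsent (hx_occ.isInfix.trans (List.drop_suffix j y).isInfix)
  · have hpj' : w.dropLast <+: y.drop (j + 1) := (List.prefix_cons_inj a).mp (hyj ▸ hpj)
    simpa using length_le_lcpLen_of_prefix hpj' ((List.dropLast_prefix w).trans hpk)
end

section
/- Let y be a word and x a minimal absent word of y of length m ≥ 2. For every ℓ with 0 ≤ ℓ ≤ m-1, the factor x[1..ℓ] is a factor of y, and moreover x[0] ∈ B(x[1..m-2]) \ B(x[1..m-1]). -/
/-- `a ∈ B(w)` (a letter immediately preceding an occurrence of `w` in `y`)
is expressed as `(a :: w) <:+: y`. -/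
theorem stmt_14 {α : Type*} (y x : List α) (h : MinimalAbsentWord y x) :
    (∀ ℓ ≤ x.length - 1, x.tail.take ℓ <:+: y) ∧
    (∀ a : α, x.head? = some a →
      (a :: x.tail.dropLast) <:+: y ∧ ¬ (a :: x.tail) <:+: y) := by
  obtain ⟨hlen, habs, hmin⟩ := h
  constructor
  · intro ℓ _
    apply hmin
    · exact ((x.tail.take_prefix ℓ).isInfix).trans x.tail_suffix.isInfix
    · intro he
      have := congrArg List.length he
      simp at this
      omega
  · intro a ha
    have hx : x = a :: x.tail := by cases x with | nil => simp at ha | cons b t => simp at ha; rw [ha]; rfl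
    constructor
    · apply hmin
      · have : a :: x.tail.dropLast = x.dropLast := by
          rw [hx]
          cases hxt : x.tail with
          | nil => rw [hx, hxt] at hlen; simp at hlen
          | cons b t => simp
        rw [this]
        exact x.dropLast_prefix.isInfix
      · intro he
        have := congrArg List.length he
        simp at this
        omega
    · rw [← hx]; exact habs
end

section
/- Let y be a word of length n with suffix array SA and LCP array LCP (with LCP[0]=0). A word u is a right-extension-maximal factor of y in the sense that u = y[SA[i]..SA[i]+LCP[i]] or u = y[SA[i]..SA[i]+LCP[i+1]] for some i, whenever u is a factor of y such that there exist two occurrences of u's longest proper prefix in y that are followed by different letters (or one occurrence at the end of y). In particular, every factor u of y that equals the longest proper suffix x[1..m-1] of some minimal absent word x of y arises in this way. -/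
/-
The suffixes of `y` that start with `u` occupy an interval `[a, b]` of ranks. If `u.dropLast`
also starts the suffix of rank `a - 1` (resp. `b + 1`), the LCP of that pair is exactly
`|u| - 1`, which gives `u = y[SA a .. SA a + LCP a]` (resp. `y[SA b .. SA b + LCP (b + 1)]`).
Otherwise every suffix starting with `u.dropLast` starts with `u`, so every occurrence of
`u.dropLast` is followed by the last letter of `u`, contradicting the two distinct followers; an
occurrence at the very end of `y` only escapes this when `|u| = 1`, and then `a = 0` and
`LCP 0 = 0` conclude. For a minimal absent word `a :: (m ++ [c])`, the occurrences of `m ++ [c]`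
and of `a :: m` exhibit `m` followed by `c` and by something other than `c`.
-/

namespace List

variable {α : Type*}

theorem IsPrefix.of_le_of_le_s19 [LinearOrder α] {p a b c : List α} (hab : a ≤ b) (hbc : b ≤ c)
    (ha : p <+: a) (hc : p <+: c) : p <+: b := by
  -- Mathlib's `≤` on lists is not core's `List.le`; the core lemmas need the latter.
  replace hab : @LE.le (List α) instLE a b := not_lt.mpr hab
  replace hbc : @LE.le (List α) instLE b c := not_lt.mpr hbc
  induction p generalizing a b c with
  | nil => exact nil_prefix
  | cons x p ih =>
    obtain ⟨a, rfl⟩ := ha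
    obtain ⟨c, rfl⟩ := hc
    cases b with
    | nil => simp at hab
    | cons z b =>
      obtain rfl : x = z :=
        le_antisymm (left_le_left_of_cons_le_cons hab) (left_le_left_of_cons_le_cons hbc)
      exact cons_prefix_cons.mpr ⟨rfl, ih (prefix_append p a) (prefix_append p c)
        (le_of_cons_le_cons hab) (le_of_cons_le_cons hbc)⟩

theorem head?_drop_length_sub_one_of_prefix {u l : List α} (hu : u ≠ []) (h : u <+: l) :
    (l.drop (u.length - 1)).head? = some (u.getLast hu) := by
  obtain ⟨t, rfl⟩ := h
  rw [drop_append_of_le_length (by omega), drop_length_sub_one hu]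
  rfl

end List

open List

section lcpLen

variable {α : Type*} [DecidableEq α]

theorem lcpLen_comm_s19 (a b : List α) : lcpLen a b = lcpLen b a := by
  induction a generalizing b with
  | nil => cases b <;> rfl
  | cons x a ih =>
    cases b with
    | nil => rfl
    | cons z b =>
      by_cases h : x = z
      · simp [lcpLen, h, ih]
      · simp [lcpLen, h, Ne.symm h]

theorem length_le_lcpLen_s19 {p a b : List α} (ha : p <+: a) (hb : p <+: b) :
    p.length ≤ lcpLen a b := by
  induction p generalizing a b with
  | nil => simp
  | cons x p ih =>
    obtain ⟨a, rfl⟩ := ha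
    obtain ⟨b, rfl⟩ := hb
    simpa [lcpLen] using ih (prefix_append p a) (prefix_append p b)

theorem List.IsPrefix.of_length_le_lcpLen_s19 {p a b : List α} (ha : p <+: a)
    (h : p.length ≤ lcpLen a b) : p <+: b := by
  induction p generalizing a b with
  | nil => exact nil_prefix
  | cons x p ih =>
    obtain ⟨a, rfl⟩ := ha
    cases b with
    | nil => simp [lcpLen] at h
    | cons z b =>
      by_cases hxz : x = z
      · subst hxz
        simp only [cons_append, lcpLen, if_true, length_cons] at h
        exact cons_prefix_cons.mpr ⟨rfl, ih (prefix_append p a) (by omega)⟩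
      · simp [lcpLen, hxz] at h

theorem eq_take_lcpLen_add_one {u a b : List α} (hu : u ≠ []) (ha : u.dropLast <+: a)
    (hb : u <+: b) (hna : ¬ u <+: a) : u = b.take (lcpLen a b + 1) := by
  have hge : u.length - 1 ≤ lcpLen a b := by
    simpa using length_le_lcpLen_s19 ha ((dropLast_prefix u).trans hb)
  have hlt : lcpLen a b < u.length := by
    by_contra! h
    exact hna (hb.of_length_le_lcpLen_s19 (lcpLen_comm_s19 a b ▸ h))
  have hpos : 0 < u.length := length_pos_iff.mpr hu
  rw [show lcpLen a b + 1 = u.length by omega]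
  exact prefix_iff_eq_take.mp hb

end lcpLen

def DropLastRightBranching {α : Type*} (y u : List α) : Prop :=
  ∃ j k : ℕ,
    (y.drop j).take (u.length - 1) = u.dropLast ∧
    (y.drop k).take (u.length - 1) = u.dropLast ∧
    (y.drop (j + (u.length - 1))).head? ≠ (y.drop (k + (u.length - 1))).head?

structure IsSuffixArray {α : Type*} [LinearOrder α] (y : List α) (SA : ℕ → ℕ) : Prop where
  lt_length : ∀ r < y.length, SA r < y.length
  injOn : ∀ r < y.length, ∀ s < y.length, SA r = SA s → r = s
  sorted : ∀ r s : ℕ, r < s → s < y.length → y.drop (SA r) < y.drop (SA s)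

namespace IsSuffixArray

variable {α : Type*} [LinearOrder α] {y : List α} {SA : ℕ → ℕ}

theorem exists_rank (hSA : IsSuffixArray y SA) {p : ℕ} (hp : p < y.length) :
    ∃ r < y.length, SA r = p := by
  have hsurj := Finset.surjOn_of_injOn_of_card_le SA
    (s := Finset.range y.length) (t := Finset.range y.length)
    (fun r hr => by simpa using hSA.lt_length r (by simpa using hr))
    (fun r hr s hs => hSA.injOn r (by simpa using hr) s (by simpa using hs)) le_rfl
    (by simpa using hp)
  simpa using hsurj

theorem drop_le (hSA : IsSuffixArray y SA) {r s : ℕ} (hrs : r ≤ s) (hs : s < y.length) :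
    y.drop (SA r) ≤ y.drop (SA s) :=
  hrs.eq_or_lt.elim (fun h => h ▸ le_rfl) (fun h => (hSA.sorted r s h hs).le)

theorem prefix_of_le_of_le (hSA : IsSuffixArray y SA) {p : List α} {r s t : ℕ} (hrs : r ≤ s)
    (hst : s ≤ t) (ht : t < y.length) (hr : p <+: y.drop (SA r)) (htp : p <+: y.drop (SA t)) :
    p <+: y.drop (SA s) :=
  IsPrefix.of_le_of_le_s19 (hSA.drop_le hrs (hst.trans_lt ht)) (hSA.drop_le hst ht) hr htp

/-- The ranks of the suffixes starting with `p` form an interval. -/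
theorem prefix_of_not_prefix_outside (hSA : IsSuffixArray y SA) {p q : List α} {a b : ℕ}
    (hpq : p <+: q) (ha : a < y.length) (hb : b < y.length) (hqa : q <+: y.drop (SA a))
    (hqb : q <+: y.drop (SA b))
    (hA : ¬ (1 ≤ a ∧ p <+: y.drop (SA (a - 1))))
    (hB : ¬ (b + 1 < y.length ∧ p <+: y.drop (SA (b + 1))))
    {r : ℕ} (hr : r < y.length) (hpr : p <+: y.drop (SA r)) : q <+: y.drop (SA r) := by
  rcases lt_or_ge r a with hra | hra
  · exact absurd ⟨by omega, hSA.prefix_of_le_of_le (by omega) (by omega) ha hpr (hpq.trans hqa)⟩ hA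
  rcases le_or_gt r b with hrb | hrb
  · exact hSA.prefix_of_le_of_le hra hrb hb hqa hqb
  · exact absurd ⟨by omega, hSA.prefix_of_le_of_le (by omega) (by omega) hr (hpq.trans hqb) hpr⟩ hB

theorem head?_drop_eq_getLast (hSA : IsSuffixArray y SA) {u : List α} (hu : u ≠ [])
    (hw : u.dropLast ≠ [])
    (hext : ∀ r < y.length, u.dropLast <+: y.drop (SA r) → u <+: y.drop (SA r))
    {p : ℕ} (hp : (y.drop p).take (u.length - 1) = u.dropLast) :
    (y.drop (p + (u.length - 1))).head? = some (u.getLast hu) := by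
  have hwp : u.dropLast <+: y.drop p := prefix_iff_eq_take.mpr (by rw [length_dropLast, hp])
  have hp : p < y.length := by
    by_contra h
    rw [drop_eq_nil_of_le (by omega), prefix_nil] at hwp
    exact hw hwp
  obtain ⟨r, hr, rfl⟩ := hSA.exists_rank hp
  rw [← drop_drop]
  exact head?_drop_length_sub_one_of_prefix hu (hext r hr hwp)

theorem exists_min_max_rank (hSA : IsSuffixArray y SA) {u : List α} (hu : u ≠ [])
    (hfac : u <:+: y) :
    ∃ a < y.length, ∃ b < y.length, u <+: y.drop (SA a) ∧ u <+: y.drop (SA b) ∧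
      ∀ r < y.length, u <+: y.drop (SA r) → a ≤ r ∧ r ≤ b := by
  classical
  set S := (Finset.range y.length).filter (fun r => u <+: y.drop (SA r))
  have hmem {r : ℕ} : r ∈ S ↔ r < y.length ∧ u <+: y.drop (SA r) := by simp [S]
  have hS : S.Nonempty := by
    obtain ⟨s, t, rfl⟩ := hfac
    obtain ⟨r, hr, hrs⟩ := hSA.exists_rank (p := s.length) (by
      have := length_pos_iff.mpr hu
      simp only [length_append]
      omega)
    exact ⟨r, hmem.2 ⟨hr, by simp [hrs]⟩⟩
  obtain ⟨ha, hua⟩ := hmem.1 (S.min'_mem hS)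
  obtain ⟨hb, hub⟩ := hmem.1 (S.max'_mem hS)
  exact ⟨_, ha, _, hb, hua, hub, fun r hr hur =>
    ⟨S.min'_le r (hmem.2 ⟨hr, hur⟩), S.le_max' r (hmem.2 ⟨hr, hur⟩)⟩⟩

theorem exists_eq_take_lcp_add_one (hSA : IsSuffixArray y SA) {LCP : ℕ → ℕ} (hLCP0 : LCP 0 = 0)
    (hLCP : ∀ r, 1 ≤ r → r < y.length → LCP r = lcpLen (y.drop (SA (r - 1))) (y.drop (SA r)))
    {u : List α} (hu : u ≠ []) (hfac : u <:+: y) (hbr : DropLastRightBranching y u) :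
    ∃ i < y.length,
      u = (y.drop (SA i)).take (LCP i + 1) ∨ u = (y.drop (SA i)).take (LCP (i + 1) + 1) := by
  obtain ⟨a, ha, b, hb, hua, hub, hab⟩ := hSA.exists_min_max_rank hu hfac
  by_cases hA : 1 ≤ a ∧ u.dropLast <+: y.drop (SA (a - 1))
  · have hna : ¬ u <+: y.drop (SA (a - 1)) := fun h => by
      have := (hab _ (by omega) h).1
      omega
    refine ⟨a, ha, Or.inl ?_⟩
    rw [hLCP a hA.1 ha]
    exact eq_take_lcpLen_add_one hu hA.2 hua hna
  by_cases hB : b + 1 < y.length ∧ u.dropLast <+: y.drop (SA (b + 1))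
  · have hnb : ¬ u <+: y.drop (SA (b + 1)) := fun h => by
      have := (hab _ hB.1 h).2
      omega
    refine ⟨b, hb, Or.inr ?_⟩
    rw [hLCP (b + 1) (by omega) hB.1, Nat.add_sub_cancel, lcpLen_comm_s19]
    exact eq_take_lcpLen_add_one hu hB.2 hub hnb
  by_cases hw : u.dropLast = []
  · have ha0 : a = 0 := by
      by_contra
      exact hA ⟨by omega, hw ▸ nil_prefix⟩
    have hlen : u.length = 1 := by
      have := congrArg length hw
      grind [length_dropLast, length_pos_iff]
    refine ⟨a, ha, Or.inl ?_⟩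
    rw [ha0, hLCP0, zero_add, ← hlen]
    exact prefix_iff_eq_take.mp (ha0 ▸ hua)
  obtain ⟨j, k, hj, hk, hjk⟩ := hbr
  have hext := fun r ↦
    hSA.prefix_of_not_prefix_outside (dropLast_prefix u) ha hb hua hub hA hB (r := r)
  exact absurd ((hSA.head?_drop_eq_getLast hu hw hext hj).trans
    (hSA.head?_drop_eq_getLast hu hw hext hk).symm) hjk

end IsSuffixArray

theorem MinimalAbsentWord.tail_ne_nil_s19 {α : Type*} {y x : List α} (hx : MinimalAbsentWord y x) :
    x.tail ≠ [] := by
  have := hx.1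
  rw [← length_pos_iff, length_tail]
  omega

theorem MinimalAbsentWord.tail_isInfix {α : Type*} {y x : List α} (hx : MinimalAbsentWord y x) :
    x.tail <:+: y :=
  hx.2.2 _ (tail_suffix x).isInfix fun h => by
    have := congrArg length h
    have := hx.1
    simp only [length_tail] at *
    omega

theorem MinimalAbsentWord.dropLastRightBranching_tail {α : Type*} {y x : List α}
    (hx : MinimalAbsentWord y x) : DropLastRightBranching y x.tail := by
  obtain ⟨hlen, habs, hmin⟩ := hx
  obtain ⟨a, m, c, rfl⟩ : ∃ a m c, x = a :: (m ++ [c]) := by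
    match x, hlen with
    | a :: v, hlen =>
      obtain ⟨m, c, rfl⟩ := (eq_nil_or_concat v).resolve_left (by rintro rfl; simp at hlen)
      exact ⟨a, m, c, by simp⟩
  obtain ⟨s, t, hst⟩ := hmin (m ++ [c]) (suffix_cons a _).isInfix (by simp)
  obtain ⟨s', t', hst'⟩ := hmin (a :: m) (prefix_append (a :: m) [c]).isInfix (by simp)
  have hj : (y.drop (s.length + m.length)).head? = some c := by simp [← hst]
  have hk : (y.drop (s'.length + 1 + m.length)).head? = t'.head? := by
    rw [← hst', show s'.length + 1 + m.length = (s' ++ a :: m).length by simp; omega, drop_left]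
  refine ⟨s.length, s'.length + 1, ?_, ?_, ?_⟩
  all_goals
    simp only [tail_cons, length_append, length_singleton, Nat.add_sub_cancel, dropLast_concat]
  · simp [← hst]
  · simp [← hst']
  rw [hj, hk]
  intro hc
  obtain ⟨t'', rfl⟩ : ∃ t'', t' = c :: t'' := by
    cases t' <;> simp_all
  exact habs ⟨s', t'', by simp [← hst']⟩

theorem stmt_19_general {α : Type*} [LinearOrder α] (y : List α)
    (SA LCP : ℕ → ℕ)
    (hSA : ∀ r < y.length, SA r < y.length)
    (hSAinj : ∀ r < y.length, ∀ s < y.length, SA r = SA s → r = s)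
    (hsorted : ∀ r s : ℕ, r < s → s < y.length → y.drop (SA r) < y.drop (SA s))
    (hLCP0 : LCP 0 = 0)
    (hLCP : ∀ r, 1 ≤ r → r < y.length →
      LCP r = lcpLen (y.drop (SA (r - 1))) (y.drop (SA r))) :
    (∀ u : List α, u ≠ [] → u <:+: y →
      (∃ j k : ℕ,
        (y.drop j).take (u.length - 1) = u.dropLast ∧
        (y.drop k).take (u.length - 1) = u.dropLast ∧
        (y.drop (j + (u.length - 1))).head? ≠ (y.drop (k + (u.length - 1))).head?) →
      ∃ i < y.length,
        u = (y.drop (SA i)).take (LCP i + 1) ∨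
        u = (y.drop (SA i)).take (LCP (i + 1) + 1)) ∧
    (∀ x : List α, MinimalAbsentWord y x →
      ∃ i < y.length,
        x.tail = (y.drop (SA i)).take (LCP i + 1) ∨
        x.tail = (y.drop (SA i)).take (LCP (i + 1) + 1)) := by
  have hSA : IsSuffixArray y SA := ⟨hSA, hSAinj, hsorted⟩
  exact ⟨fun u hu hfac hbr => hSA.exists_eq_take_lcp_add_one hLCP0 hLCP hu hfac hbr,
    fun x hx => hSA.exists_eq_take_lcp_add_one hLCP0 hLCP hx.tail_ne_nil_s19 hx.tail_isInfix
      hx.dropLastRightBranching_tail⟩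

/-- An occurrence of a word `w` at position `p` in `y` is expressed by
`(y.drop p).take w.length = w`; the letter following an occurrence of
`u.dropLast` at position `p` is `(y.drop (p + (u.length - 1))).head?`
(`none` when the occurrence ends at the end of `y`). -/
theorem stmt_19 {α : Type*} [LinearOrder α] (y : List α)
    (SA LCP : ℕ → ℕ)
    (hSA : ∀ r < y.length, SA r < y.length)
    (hSAinj : ∀ r < y.length, ∀ s < y.length, SA r = SA s → r = s)
    (hsorted : ∀ r s : ℕ, r < s → s < y.length → y.drop (SA r) < y.drop (SA s))
    (hLCP0 : LCP 0 = 0) (hLCPn : LCP y.length = 0)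
    (hLCP : ∀ r, 1 ≤ r → r < y.length →
      LCP r = lcpLen (y.drop (SA (r - 1))) (y.drop (SA r))) :
    (∀ u : List α, u ≠ [] → u <:+: y →
      (∃ j k : ℕ,
        (y.drop j).take (u.length - 1) = u.dropLast ∧
        (y.drop k).take (u.length - 1) = u.dropLast ∧
        (y.drop (j + (u.length - 1))).head? ≠ (y.drop (k + (u.length - 1))).head?) →
      ∃ i < y.length,
        u = (y.drop (SA i)).take (LCP i + 1) ∨
        u = (y.drop (SA i)).take (LCP (i + 1) + 1)) ∧
    (∀ x : List α, MinimalAbsentWord y x →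
      ∃ i < y.length,
        x.tail = (y.drop (SA i)).take (LCP i + 1) ∨
        x.tail = (y.drop (SA i)).take (LCP (i + 1) + 1)) :=
  stmt_19_general y SA LCP hSA hSAinj hsorted hLCP0 hLCP
end
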